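/- Let u ∈ 𝒩(P) and A = (1 − F₀W)^{−1}. Then A*Vu = −W̃u and R₀Vu = −u, where R₀ = AF₀ = lim_{z→0, z∉ℝ₊}(P₀ − z)^{−1}. -/
import Mathlib


noncomputable section

/-!  **Lemma 4.5 (reduction lemma).**
Abstract setting: `X` stands for the weighted space `H^{1,-s}` and `Y` for `H^{-1,s}`.
`F₀ = lim_{z→0, z∉ℝ₊} (P̃₀ - z)⁻¹ : Y → X`; `W = P̃₀ - P₀`, `W̃ = P̃₀ - P`,
`V = P - P₀ = W - W̃ : X → Y`.  `A = (1 - F₀W)⁻¹` and `A' = A* = (1 - WF₀)⁻¹`;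
`R₀ = A F₀ = lim_{z→0, z∉ℝ₊} (P₀ - z)⁻¹`.  A vector `u ∈ 𝒩(P)` is characterized by
`F₀ W̃ u = u`.  Then `A* V u = -W̃ u` and `R₀ V u = -u`. -/
theorem reduction_lemma
    {X Y : Type*} [NormedAddCommGroup X] [NormedSpace ℂ X]
    [NormedAddCommGroup Y] [NormedSpace ℂ Y]
    (F₀ : Y →L[ℂ] X) (W Wtilde V : X →L[ℂ] Y)
    (hV : V = W - Wtilde)
    (A : X →L[ℂ] X)
    (hA₁ : A ∘L (ContinuousLinearMap.id ℂ X - F₀ ∘L W) = ContinuousLinearMap.id ℂ X)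
    (hA₂ : (ContinuousLinearMap.id ℂ X - F₀ ∘L W) ∘L A = ContinuousLinearMap.id ℂ X)
    (A' : Y →L[ℂ] Y)
    (hA'₁ : A' ∘L (ContinuousLinearMap.id ℂ Y - W ∘L F₀) = ContinuousLinearMap.id ℂ Y)
    (hA'₂ : (ContinuousLinearMap.id ℂ Y - W ∘L F₀) ∘L A' = ContinuousLinearMap.id ℂ Y)
    (u : X) (hu : F₀ (Wtilde u) = u) :
    A' (V u) = -(Wtilde u) ∧ A (F₀ (V u)) = -u := by
  constructor
  · have h : V u = (ContinuousLinearMap.id ℂ Y - W ∘L F₀) (-(Wtilde u)) := by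
      simp [hV, hu]; abel
    rw [h, ← ContinuousLinearMap.comp_apply, hA'₁, ContinuousLinearMap.id_apply]
  · have h : F₀ (V u) = (ContinuousLinearMap.id ℂ X - F₀ ∘L W) (-u) := by
      simp [hV, hu]; abel
    rw [h, ← ContinuousLinearMap.comp_apply, hA₁, ContinuousLinearMap.id_apply]

end
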